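/- arXiv:1812.04390 — 2 statements merged into one kernel-verified Lean document; each statement's English description precedes it below -/
import Mathlib

section
/- (Fehér–Némethi–Rimányi identity.) Let 0 ≤ k ≤ n and m ≥ k be integers, and let λ = (λ_1 ≥ ⋯ ≥ λ_k ≥ 0) be a partition with λ_1 ≤ m − k. Set μ = (m−k, …, m−k, λ_1, …, λ_k), the partition with n parts whose first n−k parts equal m−k followed by the parts of λ. Then s_μ(x_1,…,x_n) = Σ_{S ∈ binom([n],k)} s_λ(x_S) · (∏_{j∈S̄} x_j^m) / (∏_{i∈S}∏_{j∈S̄}(x_j − x_i)). -/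
/-!
Expand the alternant `det (x_i ^ (μ_j + n - 1 - j))` by the generalized Laplace expansion along
its first `n - k` columns; it comes from factoring every permutation uniquely as the
order-preserving shuffle sending the last `k` indices onto a `k`-set `S` and the others onto `S̄`,
composed with a permutation of each block. Those columns carry the exponents
`m + (n - k - 1 - j)`, so the minor on the rows `S̄` is `∏_{j ∈ S̄} x_j ^ m` times the Vandermonde
product of `x_{S̄}`, while the complementary minor is the alternant of `λ` at `x_S`. Up to the
sign of the shuffle, the Vandermonde product of `x` splits as
`Δ(x_{S̄}) Δ(x_S) ∏_{i ∈ S, j ∈ S̄} (x_j - x_i)`, and dividing gives the summand for `S`.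
-/

/-- The Schur polynomial given by the bialternant formula
`s_λ(x_1,…,x_n) = det(x_i^{λ_j+n−j})_{1≤i,j≤n} / ∏_{i<j}(x_i − x_j)`. -/
noncomputable def schur {F : Type*} [Field F] {n : ℕ} (lam : Fin n → ℕ) (x : Fin n → F) : F :=
  (Matrix.of fun i j : Fin n => x i ^ (lam j + (n - 1 - (j : ℕ)))).det
    / ∏ i : Fin n, ∏ j ∈ Finset.Ioi i, (x i - x j)

open Finset Matrix Equiv

theorem prod_orderEmbOfFin {M α : Type*} [CommMonoid M] [LinearOrder α] (s : Finset α) {k : ℕ}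
    (h : #s = k) (f : α → M) : ∏ i, f (s.orderEmbOfFin h i) = ∏ a ∈ s, f a := by
  conv_rhs => rw [← map_orderEmbOfFin_univ s h, prod_map]
  rfl

section Alternant

variable {R : Type*} [CommRing R]

def vandermondeProd {N : ℕ} (v : Fin N → R) : R :=
  ∏ i, ∏ j ∈ Ioi i, (v i - v j)

def alternantMatrix {N : ℕ} (lam : Fin N → ℕ) (v : Fin N → R) : Matrix (Fin N) (Fin N) R :=
  of fun i j => v i ^ (lam j + (N - 1 - (j : ℕ)))

theorem det_alternantMatrix_zero {N : ℕ} (v : Fin N → R) :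
    (alternantMatrix 0 v).det = vandermondeProd v := by
  have : alternantMatrix 0 v = projVandermonde 1 v := by
    ext i j
    simp only [alternantMatrix, of_apply, Pi.zero_apply, zero_add, projVandermonde_apply,
      Pi.one_apply, one_pow, one_mul, Fin.val_rev]
    congr 1
    omega
  simp [this, det_projVandermonde, vandermondeProd]

theorem det_alternantMatrix_const {N : ℕ} (c : ℕ) (v : Fin N → R) :
    (alternantMatrix (fun _ => c) v).det = (∏ i, v i ^ c) * vandermondeProd v := by
  rw [← det_alternantMatrix_zero, ← det_mul_column]
  simp [alternantMatrix, pow_add]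

theorem vandermondeProd_eq_sign_mul_comp {N : ℕ} (v : Fin N → R) (σ : Perm (Fin N)) :
    vandermondeProd v = Perm.sign σ * vandermondeProd (v ∘ σ) := by
  rw [← det_alternantMatrix_zero, ← det_alternantMatrix_zero, ← Perm.sign_inv, ← det_permute]
  congr 1
  ext i j
  simp [alternantMatrix]

theorem vandermondeProd_ne_zero [IsDomain R] {N : ℕ} {v : Fin N → R}
    (hv : Function.Injective v) : vandermondeProd v ≠ 0 :=
  prod_ne_zero_iff.mpr fun _ _ => prod_ne_zero_iff.mpr fun _ hj =>
    sub_ne_zero.mpr (hv.ne (mem_Ioi.mp hj).ne)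

variable {p k : ℕ}

theorem vandermondeProd_append (v : Fin (p + k) → R) :
    vandermondeProd v = vandermondeProd (v ∘ Fin.castAdd k) * vandermondeProd (v ∘ Fin.natAdd p)
      * ∏ a, ∏ b, (v (Fin.castAdd k a) - v (Fin.natAdd p b)) := by
  have hlt (a : Fin p) (b : Fin k) : (a : ℕ) < p + b := by omega
  have hnlt (a : Fin p) (b : Fin k) : ¬ p + (b : ℕ) < a := by omega
  simp only [vandermondeProd, ← filter_lt_eq_Ioi, prod_filter, Fin.prod_univ_add,
    Function.comp_apply, Fin.lt_def, Fin.val_castAdd, Fin.val_natAdd,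
    add_lt_add_iff_left, hlt, hnlt, if_true, if_false, prod_const_one, prod_mul_distrib]
  ring

theorem alternantMatrix_append_submatrix_castAdd (d : Fin p → ℕ) (lam : Fin k → ℕ)
    (v : Fin (p + k) → R) (e : Fin p → Fin (p + k)) :
    (alternantMatrix (Fin.append d lam) v).submatrix e (Fin.castAdd k)
      = alternantMatrix (fun a => d a + k) (v ∘ e) := by
  ext a b
  simp only [alternantMatrix, submatrix_apply, of_apply, Fin.append_left, Fin.val_castAdd,
    Function.comp_apply]
  congr 1
  omega

theorem alternantMatrix_append_submatrix_natAdd (d : Fin p → ℕ) (lam : Fin k → ℕ)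
    (v : Fin (p + k) → R) (e : Fin k → Fin (p + k)) :
    (alternantMatrix (Fin.append d lam) v).submatrix e (Fin.natAdd p)
      = alternantMatrix lam (v ∘ e) := by
  ext a b
  simp only [alternantMatrix, submatrix_apply, of_apply, Fin.append_right, Fin.val_natAdd,
    Function.comp_apply]
  congr 2
  omega

end Alternant

section Laplace

variable {R : Type*} [CommRing R] {p k : ℕ}

theorem card_compl_of_card_eq {S : Finset (Fin (p + k))} (hS : #S = k) : #Sᶜ = p := by
  simp [card_compl, hS]

def blockPerm (S : Finset (Fin (p + k))) (hS : #S = k) : Perm (Fin (p + k)) :=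
  finSumFinEquiv.symm.trans
    ((sumComm _ _).trans (finSumEquivOfFinset hS (card_compl_of_card_eq hS)))

@[simp] theorem blockPerm_castAdd (S : Finset (Fin (p + k))) (hS : #S = k) (a : Fin p) :
    blockPerm S hS (Fin.castAdd k a) = Sᶜ.orderEmbOfFin (card_compl_of_card_eq hS) a := by
  simp [blockPerm]

@[simp] theorem blockPerm_natAdd (S : Finset (Fin (p + k))) (hS : #S = k) (b : Fin k) :
    blockPerm S hS (Fin.natAdd p b) = S.orderEmbOfFin hS b := by
  simp [blockPerm]

def shufflePerm (z : Σ _ : {S : Finset (Fin (p + k)) // #S = k}, Perm (Fin p) × Perm (Fin k)) :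
    Perm (Fin (p + k)) :=
  blockPerm z.1.1 z.1.2 * finSumFinEquiv.permCongr (sumCongr z.2.1 z.2.2)

@[simp] theorem shufflePerm_castAdd
    (z : Σ _ : {S : Finset (Fin (p + k)) // #S = k}, Perm (Fin p) × Perm (Fin k)) (a : Fin p) :
    shufflePerm z (Fin.castAdd k a) = blockPerm z.1.1 z.1.2 (Fin.castAdd k (z.2.1 a)) := by
  simp [shufflePerm, permCongr_apply]

@[simp] theorem shufflePerm_natAdd
    (z : Σ _ : {S : Finset (Fin (p + k)) // #S = k}, Perm (Fin p) × Perm (Fin k)) (b : Fin k) :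
    shufflePerm z (Fin.natAdd p b) = blockPerm z.1.1 z.1.2 (Fin.natAdd p (z.2.2 b)) := by
  simp [shufflePerm, permCongr_apply]

theorem sign_shufflePerm
    (z : Σ _ : {S : Finset (Fin (p + k)) // #S = k}, Perm (Fin p) × Perm (Fin k)) :
    Perm.sign (shufflePerm z)
      = Perm.sign (blockPerm z.1.1 z.1.2) * Perm.sign z.2.1 * Perm.sign z.2.2 := by
  rw [shufflePerm, Perm.sign_mul, Perm.sign_permCongr, Perm.sign_sumCongr, mul_assoc]

theorem image_shufflePerm_natAdd
    (z : Σ _ : {S : Finset (Fin (p + k)) // #S = k}, Perm (Fin p) × Perm (Fin k)) :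
    univ.image (fun b => shufflePerm z (Fin.natAdd p b)) = z.1.1 := by
  simp only [shufflePerm_natAdd, blockPerm_natAdd]
  conv_rhs => rw [← image_orderEmbOfFin_univ z.1.1 z.1.2, ← image_univ_equiv z.2.2, image_image]
  rfl

theorem shufflePerm_injective : Function.Injective (shufflePerm (p := p) (k := k)) := by
  rintro ⟨S, τ, ρ⟩ ⟨S', τ', ρ'⟩ h
  obtain rfl : S = S' := Subtype.ext <| by
    rw [← image_shufflePerm_natAdd ⟨S, τ, ρ⟩, ← image_shufflePerm_natAdd ⟨S', τ', ρ'⟩, h]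
  have hτ : τ = τ' := Equiv.ext fun a => by simpa using congr($h (Fin.castAdd k a))
  have hρ : ρ = ρ' := Equiv.ext fun b => by simpa using congr($h (Fin.natAdd p b))
  rw [hτ, hρ]

theorem shufflePerm_bijective : Function.Bijective (shufflePerm (p := p) (k := k)) := by
  refine (Fintype.bijective_iff_injective_and_card _).mpr ⟨shufflePerm_injective, ?_⟩
  simp only [Fintype.card_sigma, Fintype.card_prod, Fintype.card_perm, Fintype.card_fin,
    sum_const, card_univ, Fintype.card_finset_len, smul_eq_mul]
  rw [← Nat.choose_mul_factorial_mul_factorial (Nat.le_add_left k p), Nat.add_sub_cancel]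
  ring

theorem det_eq_sum_blockPerm (A : Matrix (Fin (p + k)) (Fin (p + k)) R) :
    A.det = ∑ S : {S : Finset (Fin (p + k)) // #S = k}, Perm.sign (blockPerm S.1 S.2) *
      (A.submatrix (blockPerm S.1 S.2 ∘ Fin.castAdd k) (Fin.castAdd k)).det *
      (A.submatrix (blockPerm S.1 S.2 ∘ Fin.natAdd p) (Fin.natAdd p)).det := by
  rw [det_apply', ← shufflePerm_bijective.sum_comp
    (fun σ : Perm (Fin (p + k)) => ((Perm.sign σ : ℤ) : R) * ∏ i, A (σ i) i),
    ← univ_sigma_univ, sum_sigma]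
  refine sum_congr rfl fun S _ => ?_
  simp only [det_apply', mul_sum, sum_mul, Fintype.sum_prod_type, submatrix_apply,
    Function.comp_apply]
  rw [sum_comm (s := univ (α := Perm (Fin k)))]
  refine sum_congr rfl fun τ _ => sum_congr rfl fun ρ _ => ?_
  rw [sign_shufflePerm, Fin.prod_univ_add]
  simp only [shufflePerm_castAdd, shufflePerm_natAdd, Units.val_mul, Int.cast_mul]
  ring

theorem vandermondeProd_eq_sign_mul_blocks (x : Fin (p + k) → R) (S : Finset (Fin (p + k)))
    (hS : #S = k) :
    vandermondeProd x = Perm.sign (blockPerm S hS) *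
      (vandermondeProd (x ∘ Sᶜ.orderEmbOfFin (card_compl_of_card_eq hS)) *
        vandermondeProd (x ∘ S.orderEmbOfFin hS) * ∏ i ∈ S, ∏ j ∈ Sᶜ, (x j - x i)) := by
  rw [vandermondeProd_eq_sign_mul_comp x (blockPerm S hS), vandermondeProd_append, prod_comm,
    ← prod_orderEmbOfFin S hS]
  simp only [← prod_orderEmbOfFin Sᶜ (card_compl_of_card_eq hS), Function.comp_def,
    blockPerm_castAdd, blockPerm_natAdd]

end Laplace

theorem schur_eq_det_div {F : Type*} [Field F] {N : ℕ} (lam : Fin N → ℕ) (x : Fin N → F) :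
    schur lam x = (alternantMatrix lam x).det / vandermondeProd x :=
  rfl

theorem schur_append_const_eq_sum {F : Type*} [Field F] {p k : ℕ} (c : ℕ) (lam : Fin k → ℕ)
    (x : Fin (p + k) → F) (hx : Function.Injective x) :
    schur (Fin.append (fun _ : Fin p => c) lam) x
      = ∑ S : {S : Finset (Fin (p + k)) // #S = k}, schur lam (x ∘ S.1.orderEmbOfFin S.2) *
          ((∏ j ∈ S.1ᶜ, x j ^ (c + k)) / ∏ i ∈ S.1, ∏ j ∈ S.1ᶜ, (x j - x i)) := by
  rw [schur_eq_det_div, det_eq_sum_blockPerm, sum_div]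
  refine sum_congr rfl fun ⟨S, hS⟩ _ => ?_
  have hD := vandermondeProd_eq_sign_mul_blocks x S hS
  have hD0 := hD ▸ vandermondeProd_ne_zero hx
  simp only [mul_ne_zero_iff] at hD0
  obtain ⟨hsign, ⟨hcompl, -⟩, -⟩ := hD0
  have hcastAdd : blockPerm S hS ∘ Fin.castAdd k = Sᶜ.orderEmbOfFin (card_compl_of_card_eq hS) :=
    funext (blockPerm_castAdd S hS)
  have hnatAdd : blockPerm S hS ∘ Fin.natAdd p = S.orderEmbOfFin hS :=
    funext (blockPerm_natAdd S hS)
  rw [alternantMatrix_append_submatrix_castAdd, alternantMatrix_append_submatrix_natAdd,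
    det_alternantMatrix_const, schur_eq_det_div, hD, hcastAdd, hnatAdd]
  simp only [Function.comp_apply]
  rw [prod_orderEmbOfFin Sᶜ _ (fun j => x j ^ (c + k))]
  field_simp

/-- The Fehér–Némethi–Rimányi identity: with `μ = (m−k,…,m−k,λ_1,…,λ_k)` (`m−k` repeated
`n−k` times), `s_μ(x) = Σ_{S ∈ binom([n],k)} s_λ(x_S) ∏_{j∈S̄} x_j^m / ∏_{i∈S}∏_{j∈S̄}(x_j−x_i)`. -/
theorem stmt8 {F : Type*} [Field F] (n k m : ℕ) (hkn : k ≤ n) (hkm : k ≤ m)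
    (x : Fin n → F) (hx : Function.Injective x)
    (lam : Fin k → ℕ) :
    schur (fun i : Fin n =>
        if h : (i : ℕ) < n - k then m - k
        else lam ⟨(i : ℕ) - (n - k), by have := i.isLt; omega⟩) x
      = ∑ S : {S : Finset (Fin n) // S.card = k},
          schur lam (fun i : Fin k => x ((S.1.orderIsoOfFin S.2 i : Fin n)))
            * ((∏ j ∈ S.1ᶜ, x j ^ m) / ∏ i ∈ S.1, ∏ j ∈ S.1ᶜ, (x j - x i)) := by
  obtain ⟨p, rfl⟩ : ∃ p, n = p + k := ⟨n - k, by omega⟩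
  have hμ : (fun i : Fin (p + k) =>
      if h : (i : ℕ) < p + k - k then m - k
      else lam ⟨(i : ℕ) - (p + k - k), by have := i.isLt; omega⟩)
      = Fin.append (fun _ : Fin p => m - k) lam := by
    funext i
    induction i using Fin.addCases <;> simp
  rw [hμ, schur_append_const_eq_sum _ _ _ hx, Nat.sub_add_cancel hkm]
  rfl
end

section
/- For every integer n ≥ 1, let H(n) be the n×n matrix whose entry in row r and column c (1 ≤ r, c ≤ n) is Σ_{i=0}^{n−r} binom(c−1, i) · E^β_{i−c+r}(Y_{n−c}) · β^i. Then det(H(n)) = 1. -/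
/-!
Column `c` of the matrix lists the coefficients of `(X + β)^c ∏_{j < n-1-c} (1 + β y_j + y_j X)`,
the Taylor shift `p_c(X + β)` of `p_c = X^c ∏_{j < n-1-c} (1 + y_j X)`. Every `p_c` has degree
`< n`, so the matrix is the matrix of the shift `p ↦ p(X + β)` on polynomials of degree `< n`
(upper unitriangular, with entries `binom(k, r) β^(k-r)`) times the coefficient matrix of the
`p_c`, which is lower unitriangular because `p_c` starts with `X^c`.
-/

/-- `E^β_k(Y_n) = Σ_{S ⊆ [n], |S| = k} (∏_{i∈S} y_i)(∏_{j∈[n]∖S} (1 + βy_j))` for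
`0 ≤ k ≤ n`, and `0` for `k < 0` or `k > n` (`y t` is `y_{t+1}`, 0-based). -/
def Ebeta {R : Type*} [CommRing R] (β : R) (y : ℕ → R) (k : ℤ) (n : ℕ) : R :=
  if 0 ≤ k then
    ∑ S ∈ Finset.powersetCard k.toNat (Finset.range n),
      (∏ i ∈ S, y i) * ∏ j ∈ Finset.range n \ S, (1 + β * y j)
  else 0

open Polynomial Finset

theorem coeff_prod_C_mul_X_add_C {R ι : Type*} [CommRing R] [DecidableEq ι]
    (s : Finset ι) (a b : ι → R) (k : ℕ) :
    (∏ j ∈ s, (C (b j) * X + C (a j))).coeff k =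
      ∑ S ∈ s.powersetCard k, (∏ i ∈ S, b i) * ∏ j ∈ s \ S, a j := by
  simp_rw [prod_add, finsetSum_coeff, prod_mul_distrib, ← map_prod, prod_const,
    mul_right_comm _ (X ^ _), ← C_mul, coeff_C_mul_X_pow, powersetCard_eq_filter, sum_filter,
    eq_comm]

namespace Matrix

variable {R : Type*} [CommRing R] {n : ℕ}

theorem det_coeff_comp_X_add_C (p : Fin n → R[X]) (hp : ∀ c, (p c).natDegree < n) (b : R) :
    (of fun r c : Fin n => ((p c).comp (X + C b)).coeff r).det =
      (of fun r c : Fin n => (p c).coeff r).det := by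
  have hfactor : (of fun r c : Fin n => ((p c).comp (X + C b)).coeff r) =
      (of fun r k : Fin n => ((X + C b) ^ (k : ℕ)).coeff r) *
        of fun k c : Fin n => (p c).coeff k := by
    ext r c
    conv_lhs => rw [of_apply, (p c).as_sum_range_C_mul_X_pow' (hp c)]
    simp only [mul_apply, of_apply]
    rw [Polynomial.sum_comp, finsetSum_coeff, Finset.sum_range]
    refine sum_congr rfl fun k _ => ?_
    rw [mul_comp, C_comp, X_pow_comp, coeff_C_mul, mul_comm]
  have hshift : (of fun r k : Fin n => ((X + C b) ^ (k : ℕ)).coeff r).det = 1 := by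
    rw [det_of_isUpperTriangular]
    · simp [coeff_X_add_C_pow]
    · intro r k hkr
      simp [coeff_X_add_C_pow, Nat.choose_eq_zero_of_lt (show (k : ℕ) < r from hkr)]
  rw [hfactor, det_mul, hshift, one_mul]

theorem det_coeff_X_pow_mul (q : Fin n → R[X]) (hq : ∀ c, (q c).coeff 0 = 1) :
    (of fun r c : Fin n => (X ^ (c : ℕ) * q c).coeff r).det = 1 := by
  rw [det_of_isLowerTriangular]
  · simp [coeff_X_pow_mul', hq]
  · intro r c hrc
    simp [coeff_X_pow_mul', not_le.2 (OrderDual.toDual_lt_toDual.1 hrc)]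

end Matrix

section Ebeta

variable {R : Type*} [CommRing R] (β : R) (y : ℕ → R)

noncomputable def esymmGen (m : ℕ) : R[X] :=
  ∏ j ∈ range m, (C (y j) * X + 1)

theorem natDegree_esymmGen_le (m : ℕ) : (esymmGen y m).natDegree ≤ m := by
  have hfactor (j : ℕ) : (C (y j) * X + 1).natDegree ≤ 1 := by
    rw [← C_1]
    exact natDegree_linear_le
  calc (esymmGen y m).natDegree ≤ ∑ j ∈ range m, (C (y j) * X + 1 : R[X]).natDegree :=
        natDegree_prod_le _ _
    _ ≤ ∑ _j ∈ range m, 1 := sum_le_sum fun j _ => hfactor j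
    _ = m := by simp

theorem coeff_zero_esymmGen (m : ℕ) : (esymmGen y m).coeff 0 = 1 := by
  simp [esymmGen, coeff_zero_eq_eval_zero, eval_prod]

theorem Ebeta_natCast (k m : ℕ) :
    Ebeta β y k m = ((esymmGen y m).comp (X + C β)).coeff k := by
  have hfactor (j : ℕ) : (C (y j) * X + 1).comp (X + C β) = C (y j) * X + C (1 + β * y j) := by
    simp only [add_comp, mul_comp, C_comp, X_comp, one_comp, C_add, C_mul, C_1]
    ring
  rw [esymmGen, Polynomial.prod_comp]
  simp only [hfactor]
  rw [coeff_prod_C_mul_X_add_C]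
  simp [Ebeta]

theorem Ebeta_of_neg {k : ℤ} (hk : k < 0) (m : ℕ) : Ebeta β y k m = 0 :=
  if_neg (not_le.2 hk)

theorem Ebeta_of_lt {k : ℤ} {m : ℕ} (hk : (m : ℤ) < k) : Ebeta β y k m = 0 := by
  have hempty : powersetCard k.toNat (range m) = ∅ :=
    powersetCard_eq_empty.2 (by rw [card_range]; omega)
  simp [Ebeta, hempty]

theorem coeff_X_pow_mul_esymmGen_comp {i c : ℕ} (hi : i ≤ c) (r m : ℕ) :
    (X ^ (c - i) * (esymmGen y m).comp (X + C β)).coeff r =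
      Ebeta β y ((i : ℤ) - (c : ℤ) + (r : ℤ)) m := by
  rw [coeff_X_pow_mul']
  split_ifs with h
  · rw [show (i : ℤ) - c + r = ((r - (c - i) : ℕ) : ℤ) by omega, Ebeta_natCast]
  · exact (Ebeta_of_neg β y (by omega) m).symm

theorem sum_choose_mul_Ebeta_mul_pow {c r m N : ℕ} (hN : m + c < N) :
    ∑ i ∈ range (N - r), (c.choose i : R) * Ebeta β y ((i : ℤ) - (c : ℤ) + (r : ℤ)) m * β ^ i =
      ((X ^ c * esymmGen y m).comp (X + C β)).coeff r := by
  set f : ℕ → R := fun i => (c.choose i : R) * Ebeta β y ((i : ℤ) - (c : ℤ) + (r : ℤ)) m * β ^ i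
  have hexpand : (X ^ c * esymmGen y m).comp (X + C β) = ∑ i ∈ range (c + 1),
      C (β ^ i * c.choose i) * (X ^ (c - i) * (esymmGen y m).comp (X + C β)) := by
    rw [mul_comp, X_pow_comp, add_comm X, add_pow, sum_mul]
    refine sum_congr rfl fun i _ => ?_
    simp only [map_mul, map_pow, map_natCast]
    ring
  have hlow : ∑ i ∈ range (c + 1), f i = ∑ i ∈ range (N + c), f i :=
    sum_subset (range_subset_range.2 (by omega)) fun i _ hi => by
      simp [f, Nat.choose_eq_zero_of_lt (show c < i by simpa using hi)]
  have hhigh : ∑ i ∈ range (N - r), f i = ∑ i ∈ range (N + c), f i :=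
    sum_subset (range_subset_range.2 (by omega)) fun i _ hi => by
      simp [f, Ebeta_of_lt β y (show (m : ℤ) < i - c + r by simp at hi; omega)]
  rw [hhigh, ← hlow, hexpand, finsetSum_coeff]
  refine sum_congr rfl fun i hi => ?_
  rw [coeff_C_mul, coeff_X_pow_mul_esymmGen_comp β y (by simpa [Nat.lt_succ_iff] using hi)]
  ring

end Ebeta

/-- `r, c : Fin n` are 0-based: row `r` and column `c` are the paper's `r + 1` and `c + 1`. -/
theorem stmt12_general {R : Type*} [CommRing R] (β : R) (y : ℕ → R) (n : ℕ) :
    (Matrix.of fun r c : Fin n =>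
        ∑ i ∈ Finset.range (n - (r : ℕ)),
          (Nat.choose (c : ℕ) i : R)
            * Ebeta β y ((i : ℤ) - ((c : ℕ) : ℤ) + ((r : ℕ) : ℤ)) (n - 1 - (c : ℕ))
            * β ^ i).det = 1 := by
  have hdeg (c : Fin n) : (X ^ (c : ℕ) * esymmGen y (n - 1 - c)).natDegree < n :=
    calc _ ≤ c + (n - 1 - c) :=
          natDegree_mul_le.trans (add_le_add (natDegree_X_pow_le _) (natDegree_esymmGen_le y _))
      _ < n := by omega
  calc _ = (Matrix.of fun r c : Fin n =>
          (((X : R[X]) ^ (c : ℕ) * esymmGen y (n - 1 - c)).comp (X + C β)).coeff r).det := by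
        congr 1
        ext r c
        exact sum_choose_mul_Ebeta_mul_pow β y (by omega)
    _ = (Matrix.of fun r c : Fin n =>
          ((X : R[X]) ^ (c : ℕ) * esymmGen y (n - 1 - c)).coeff r).det :=
        Matrix.det_coeff_comp_X_add_C _ hdeg β
    _ = 1 := Matrix.det_coeff_X_pow_mul _ fun c => coeff_zero_esymmGen y _

/-- `det(H(n)) = 1`, where `H(n)` has entries
`H(n)_{r,c} = Σ_{i=0}^{n−r} binom(c−1,i) E^β_{i−c+r}(Y_{n−c}) β^i` for `1 ≤ r, c ≤ n`
(here `r, c : Fin n` are 0-based, corresponding to `r+1`, `c+1` above). -/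
theorem stmt12 {R : Type*} [CommRing R] (β : R) (y : ℕ → R) (n : ℕ) (hn : 1 ≤ n) :
    (Matrix.of fun r c : Fin n =>
        ∑ i ∈ Finset.range (n - (r : ℕ)),
          (Nat.choose (c : ℕ) i : R)
            * Ebeta β y ((i : ℤ) - ((c : ℕ) : ℤ) + ((r : ℕ) : ℤ)) (n - 1 - (c : ℕ))
            * β ^ i).det = 1 :=
  stmt12_general β y n
end
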